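/- arXiv:2507.04712 — 3 statements merged into one kernel-verified Lean document; each statement's English description precedes it below -/
import Mathlib

section
/- Let T ≥ 1, and for k ∈ {0,…,T−1} let A_k be invertible n×n real matrices, B_k be n×m real matrices, R_k and Σρ_k be m×m symmetric positive definite matrices, and ε > 0. Define Π_T = F with F n×n symmetric positive definite, and Π_k = A_kᵀ Π_{k+1} A_k − A_kᵀ Π_{k+1} B_k (R_k + B_kᵀ Π_{k+1} B_k + ε Σρ_k⁻¹)⁻¹ B_kᵀ Π_{k+1} A_k for k = T−1,…,0. Then Π_k is invertible (indeed symmetric positive definite) for every k ∈ {0,…,T}. -/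
/-!
The Riccati step is a congruence of a Woodbury expression: for `P ≻ 0` and `S ≻ 0`,
`P - P B (S + Bᴴ P B)⁻¹ Bᴴ P = (P⁻¹ + B S⁻¹ Bᴴ)⁻¹`, the inverse of a positive definite matrix,
and congruence `X ↦ Aᴴ X A` by an invertible `A` preserves positive definiteness.
Since `R_k + ε Σρ_k⁻¹ ≻ 0`, positive definiteness propagates backwards from `Π_T = F`.
-/

open Matrix
open scoped ComplexOrder

namespace Matrix

variable {𝕜 : Type*} [Field 𝕜] {n m : Type*} [Fintype n] [DecidableEq n] [Fintype m]
  [DecidableEq m]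

/-- The Woodbury identity written for `P⁻¹` and `S⁻¹` in place of `A` and `C`. -/
theorem inv_add_mul_inv_mul_eq_sub {P : Matrix n n 𝕜} {S : Matrix m m 𝕜} (U : Matrix n m 𝕜)
    (V : Matrix m n 𝕜) (hP : IsUnit P) (hS : IsUnit S) (hSP : IsUnit (S + V * P * U)) :
    (P⁻¹ + U * S⁻¹ * V)⁻¹ = P - P * U * (S + V * P * U)⁻¹ * V * P := by
  have hP' : P⁻¹⁻¹ = P := nonsing_inv_nonsing_inv P ((isUnit_iff_isUnit_det P).mp hP)
  have hS' : S⁻¹⁻¹ = S := nonsing_inv_nonsing_inv S ((isUnit_iff_isUnit_det S).mp hS)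
  simpa only [hP', hS'] using
    add_mul_mul_inv_eq_sub P⁻¹ U S⁻¹ V (isUnit_nonsing_inv_iff.mpr hP)
      (isUnit_nonsing_inv_iff.mpr hS) (by rwa [hP', hS'])

end Matrix

section Riccati

variable {𝕜 : Type*} [RCLike 𝕜] {n m : Type*} [Fintype n] [Fintype m] [DecidableEq m]

noncomputable def riccatiStep (A : Matrix n n 𝕜) (B : Matrix n m 𝕜) (S : Matrix m m 𝕜)
    (P : Matrix n n 𝕜) : Matrix n n 𝕜 :=
  Aᴴ * P * A - Aᴴ * P * B * (S + Bᴴ * P * B)⁻¹ * Bᴴ * P * A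

theorem riccatiStep_eq_conjTranspose_mul_mul (A : Matrix n n 𝕜) (B : Matrix n m 𝕜)
    (S : Matrix m m 𝕜) (P : Matrix n n 𝕜) :
    riccatiStep A B S P = Aᴴ * (P - P * B * (S + Bᴴ * P * B)⁻¹ * Bᴴ * P) * A := by
  simp only [riccatiStep, Matrix.mul_sub, Matrix.sub_mul, Matrix.mul_assoc]

theorem Matrix.PosDef.sub_mul_inv_add_mul_mul [DecidableEq n] {P : Matrix n n 𝕜}
    {S : Matrix m m 𝕜} (hP : P.PosDef) (hS : S.PosDef) (B : Matrix n m 𝕜) :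
    (P - P * B * (S + Bᴴ * P * B)⁻¹ * Bᴴ * P).PosDef := by
  have hSBPB : (S + Bᴴ * P * B).PosDef :=
    hS.add_posSemidef (hP.posSemidef.conjTranspose_mul_mul_same B)
  have hInvAdd : (P⁻¹ + B * S⁻¹ * Bᴴ).PosDef :=
    hP.inv.add_posSemidef (hS.inv.posSemidef.mul_mul_conjTranspose_same B)
  rw [← inv_add_mul_inv_mul_eq_sub B Bᴴ hP.isUnit hS.isUnit hSBPB.isUnit]
  exact hInvAdd.inv

theorem Matrix.PosDef.riccatiStep [DecidableEq n] {P A : Matrix n n 𝕜} {S : Matrix m m 𝕜}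
    (hP : P.PosDef) (hA : IsUnit A) (hS : S.PosDef) (B : Matrix n m 𝕜) :
    (riccatiStep A B S P).PosDef := by
  rw [riccatiStep_eq_conjTranspose_mul_mul, ← star_eq_conjTranspose,
    IsUnit.posDef_star_left_conjugate_iff hA]
  exact hP.sub_mul_inv_add_mul_mul hS B

end Riccati

theorem riccati_posDef_invertible_general
    (n m T : ℕ) (ε : ℝ) (hε : 0 < ε)
    (A : ℕ → Matrix (Fin n) (Fin n) ℝ) (B : ℕ → Matrix (Fin n) (Fin m) ℝ)
    (R Sρ : ℕ → Matrix (Fin m) (Fin m) ℝ)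
    (hA : ∀ k < T, IsUnit (A k))
    (hR : ∀ k < T, (R k).PosDef) (hSρ : ∀ k < T, (Sρ k).PosDef)
    (F : Matrix (Fin n) (Fin n) ℝ) (hF : F.PosDef)
    (Pm : ℕ → Matrix (Fin n) (Fin n) ℝ)
    (hPmT : Pm T = F)
    (hrec : ∀ k < T, Pm k =
      (A k)ᵀ * Pm (k + 1) * A k -
        (A k)ᵀ * Pm (k + 1) * B k *
          (R k + (B k)ᵀ * Pm (k + 1) * B k + ε • (Sρ k)⁻¹)⁻¹ *
          (B k)ᵀ * Pm (k + 1) * A k) :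
    ∀ k ≤ T, IsUnit (Pm k) ∧ (Pm k).PosDef := by
  intro k hk
  suffices hPD : (Pm k).PosDef from ⟨hPD.isUnit, hPD⟩
  induction hk using Nat.decreasingInduction with
  | self => rwa [hPmT]
  | of_succ k hk hPD =>
    have hS : (R k + ε • (Sρ k)⁻¹).PosDef := (hR k hk).add ((hSρ k hk).inv.smul hε)
    have hstep := hPD.riccatiStep (hA k hk) hS (B k)
    rw [riccatiStep, add_right_comm] at hstep
    simpa only [hrec k hk, conjTranspose_eq_transpose_of_trivial] using hstep

/-- When additionally every `A k` is invertible, the solution of the backward modified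
Riccati recursion is positive definite, hence invertible, at every time step. -/
theorem riccati_posDef_invertible
    (n m T : ℕ) (hT : 1 ≤ T) (ε : ℝ) (hε : 0 < ε)
    (A : ℕ → Matrix (Fin n) (Fin n) ℝ) (B : ℕ → Matrix (Fin n) (Fin m) ℝ)
    (R Sρ : ℕ → Matrix (Fin m) (Fin m) ℝ)
    (hA : ∀ k < T, IsUnit (A k))
    (hR : ∀ k < T, (R k).PosDef) (hSρ : ∀ k < T, (Sρ k).PosDef)
    (F : Matrix (Fin n) (Fin n) ℝ) (hF : F.PosDef)
    (Pm : ℕ → Matrix (Fin n) (Fin n) ℝ)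
    (hPmT : Pm T = F)
    (hrec : ∀ k < T, Pm k =
      (A k)ᵀ * Pm (k + 1) * A k -
        (A k)ᵀ * Pm (k + 1) * B k *
          (R k + (B k)ᵀ * Pm (k + 1) * B k + ε • (Sρ k)⁻¹)⁻¹ *
          (B k)ᵀ * Pm (k + 1) * A k) :
    ∀ k ≤ T, IsUnit (Pm k) ∧ (Pm k).PosDef :=
  riccati_posDef_invertible_general n m T ε hε A B R Sρ hA hR hSρ F hF Pm hPmT hrec
end

section
/- Let μ be a probability measure on a measurable space X, let κ be a Markov kernel from X to a standard Borel measurable space U, and let ρ* := μ.bind κ be the marginal of κ under μ (i.e., ρ*(S) = ∫ κ(x)(S) dμ(x)). Then for every probability measure ρ on U, ∫ D_KL(κ(x) ‖ ρ) dμ(x) = ∫ D_KL(κ(x) ‖ ρ*) dμ(x) + D_KL(ρ* ‖ ρ) (as an identity in [0,∞]). In particular, ρ* minimizes ρ ↦ ∫ D_KL(κ(x) ‖ ρ) dμ(x) over all probability measures ρ on U. -/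
open MeasureTheory ProbabilityTheory ENNReal
open scoped Classical

/-- Kullback–Leibler divergence, valued in `[0, ∞]`: equal to `∫ log(dp/dq) dp` when
`p ≪ q` (and this integral is well defined), and `+∞` otherwise. -/
noncomputable def klDiv {α : Type*} [MeasurableSpace α] (p q : Measure α) : ℝ≥0∞ :=
  if p ≪ q ∧ Integrable (llr p q) p then ENNReal.ofReal (∫ x, llr p q x ∂p) else ⊤

/-! Write `ρ* = κ ∘ₘ μ`, `g = dρ*/dρ` and `f x = dκ(x)/dρ*`, so that `dκ(x)/dρ = f x · g` and
`∫ f x u dμ(x) = 1` for `ρ*`-a.e. `u`. Every divergence involved is `∫ klFun (density) dρ` with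
`klFun t = t log t + 1 - t`, and the identity `klFun (ab) + a + b = b klFun a + a klFun b + 1 + ab`,
whose terms are all nonnegative for `a, b ≥ 0`, integrated in `x` and then in `u`, yields the
decomposition between `[0, ∞]`-valued integrals, with no integrability conditions. If `κ x ≪ ρ`
fails on a set of positive `μ`-measure, both sides are infinite. -/

namespace MeasureTheory.Measure

variable {α : Type*} [MeasurableSpace α] {p q r : Measure α}

lemma rnDeriv_ae_eq_mul_rnDeriv [SigmaFinite p] [SigmaFinite q] [SigmaFinite r] (hpq : p ≪ q)
    {f : α → ℝ≥0∞} (hf : f =ᵐ[q] p.rnDeriv q) : p.rnDeriv r =ᵐ[r] f * q.rnDeriv r := by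
  filter_upwards [rnDeriv_mul_rnDeriv (κ := r) hpq, ae_rnDeriv_ne_zero_imp_of_ae r hf]
    with u hu hfu
  rw [← hu, Pi.mul_apply, Pi.mul_apply]
  rcases eq_or_ne (q.rnDeriv r u) 0 with h0 | h0
  · simp [h0]
  · rw [hfu h0]

lemma AbsolutelyContinuous.withDensity_of_ae_ne_zero
    (hpq : p ≪ q) {g : α → ℝ≥0∞} (hg : Measurable g) (hg0 : ∀ᵐ u ∂p, g u ≠ 0) :
    p ≪ q.withDensity g := by
  refine AbsolutelyContinuous.mk fun N hN hqN => ?_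
  rw [withDensity_apply _ hN, lintegral_eq_zero_iff hg, Filter.EventuallyEq,
    ae_restrict_iff' hN] at hqN
  rw [measure_eq_zero_iff_ae_notMem]
  filter_upwards [hpq.ae_le hqN, hg0] with u hu hu0 huN using hu0 (hu huN)

section Comp

variable {X U : Type*} [MeasurableSpace X] [MeasurableSpace U] {μ : Measure X} {κ : Kernel X U}
  {ν : Measure U}

lemma comp_absolutelyContinuous_of_ae (h : ∀ᵐ x ∂μ, κ x ≪ ν) : κ ∘ₘ μ ≪ ν := by
  have := AbsolutelyContinuous.comp_left μ (η := Kernel.const X ν) h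
  rw [const_comp] at this
  exact this.trans smul_absolutelyContinuous

lemma ae_absolutelyContinuous_comp [IsFiniteMeasure μ] [IsFiniteKernel κ] [SigmaFinite ν]
    (h : ∀ᵐ x ∂μ, κ x ≪ ν) : ∀ᵐ x ∂μ, κ x ≪ κ ∘ₘ μ := by
  have hac := comp_absolutelyContinuous_of_ae h
  filter_upwards [h, ae_ae_of_ae_comp (rnDeriv_pos hac)] with x hx hpos
  rw [← withDensity_rnDeriv_eq _ _ hac]
  exact hx.withDensity_of_ae_ne_zero (measurable_rnDeriv _ _) (hpos.mono fun _ hu => hu.ne')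

variable [MeasurableSpace.CountableOrCountablyGenerated X U]

lemma comp_eq_withDensity_lintegral_rnDeriv [SFinite μ] [IsFiniteKernel κ] [IsFiniteMeasure ν]
    (h : ∀ᵐ x ∂μ, κ x ≪ ν) :
    κ ∘ₘ μ = ν.withDensity fun u => ∫⁻ x, κ.rnDeriv (Kernel.const X ν) x u ∂μ := by
  ext s hs
  rw [bind_apply hs κ.aemeasurable, withDensity_apply _ hs,
    ← lintegral_lintegral_swap (μ := μ) (ν := ν.restrict s)
      (Kernel.measurable_rnDeriv κ (Kernel.const X ν)).aemeasurable]
  refine lintegral_congr_ae (h.mono fun x hx => ?_)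
  exact (Kernel.setLIntegral_rnDeriv (η := Kernel.const X ν) hx hs).symm

lemma ae_lintegral_rnDeriv_comp_eq_one [IsFiniteMeasure μ] [IsFiniteKernel κ]
    (h : ∀ᵐ x ∂μ, κ x ≪ κ ∘ₘ μ) :
    ∀ᵐ u ∂(κ ∘ₘ μ), ∫⁻ x, κ.rnDeriv (Kernel.const X (κ ∘ₘ μ)) x u ∂μ = 1 := by
  have hF := rnDeriv_withDensity (κ ∘ₘ μ)
    ((Kernel.measurable_rnDeriv κ (Kernel.const X (κ ∘ₘ μ))).lintegral_prod_left' (μ := μ))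
  rw [← comp_eq_withDensity_lintegral_rnDeriv h] at hF
  filter_upwards [hF, rnDeriv_self (κ ∘ₘ μ)] with u h1 h2
  rw [← h1, h2]

end Comp

end MeasureTheory.Measure

namespace InformationTheory

lemma klFun_mul_add_add (a b : ℝ) :
    klFun (a * b) + a + b = b * klFun a + a * klFun b + 1 + a * b := by
  rcases eq_or_ne a 0 with rfl | ha
  · simp [klFun_apply, add_comm]
  rcases eq_or_ne b 0 with rfl | hb
  · simp [klFun_apply, add_comm]
  simp only [klFun_apply, Real.log_mul ha hb]
  ring

lemma ofReal_klFun_mul_add_add {a b : ℝ} (ha : 0 ≤ a) (hb : 0 ≤ b) :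
    ENNReal.ofReal (klFun (a * b)) + ENNReal.ofReal a + ENNReal.ofReal b
      = ENNReal.ofReal b * ENNReal.ofReal (klFun a) + ENNReal.ofReal a * ENNReal.ofReal (klFun b)
        + 1 + ENNReal.ofReal a * ENNReal.ofReal b := by
  have hab := klFun_nonneg (mul_nonneg ha hb)
  have h1 := mul_nonneg hb (klFun_nonneg ha)
  have h2 := mul_nonneg ha (klFun_nonneg hb)
  rw [← ENNReal.ofReal_add hab ha, ← ENNReal.ofReal_add (add_nonneg hab ha) hb,
    klFun_mul_add_add, ← ENNReal.ofReal_mul hb, ← ENNReal.ofReal_mul ha, ← ENNReal.ofReal_mul ha,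
    ← ENNReal.ofReal_add h1 h2, ← ENNReal.ofReal_one,
    ← ENNReal.ofReal_add (add_nonneg h1 h2) zero_le_one,
    ← ENNReal.ofReal_add (by positivity) (mul_nonneg ha hb)]

variable {X U : Type*} [MeasurableSpace X] [MeasurableSpace U] {μ : Measure X} {κ : Kernel X U}
  {ρ : Measure U}

lemma lintegral_ofReal_klFun_toReal_mul [IsProbabilityMeasure μ] {a : X → ℝ≥0∞}
    (ha : Measurable a) (ha1 : ∫⁻ x, a x ∂μ = 1) {b : ℝ≥0∞} (hb : b ≠ ∞) :
    ∫⁻ x, ENNReal.ofReal (klFun ((a x).toReal * b.toReal)) ∂μ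
      = b * ∫⁻ x, ENNReal.ofReal (klFun (a x).toReal) ∂μ + ENNReal.ofReal (klFun b.toReal) := by
  have ha1_toReal : ∫⁻ x, ENNReal.ofReal (a x).toReal ∂μ = 1 := by
    rw [lintegral_congr_ae (ofReal_toReal_ae_eq (ae_lt_top ha (ha1 ▸ one_ne_top))), ha1]
  have h := lintegral_congr (μ := μ) fun x =>
    ofReal_klFun_mul_add_add (a := (a x).toReal) toReal_nonneg (toReal_nonneg (a := b))
  rw [lintegral_add_right _ measurable_const, lintegral_add_left (by fun_prop),
    lintegral_add_right _ (by fun_prop), lintegral_add_right _ measurable_const,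
    lintegral_add_left (by fun_prop), lintegral_const_mul _ (by fun_prop),
    lintegral_mul_const _ (by fun_prop), lintegral_mul_const _ (by fun_prop), lintegral_const,
    lintegral_const, ha1_toReal, measure_univ, ENNReal.ofReal_toReal hb] at h
  simp only [mul_one, one_mul] at h
  exact (ENNReal.add_left_inj ENNReal.one_ne_top).1 ((ENNReal.add_left_inj hb).1 h)

variable [MeasurableSpace.CountableOrCountablyGenerated X U]

lemma lintegral_klDiv_eq_top_of_not_ae_ac [IsFiniteKernel κ] [IsFiniteMeasure ρ]
    (h : ¬ ∀ᵐ x ∂μ, κ x ≪ ρ) : ∫⁻ x, klDiv (κ x) ρ ∂μ = ∞ := by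
  have hS : MeasurableSet {x | ¬ κ x ≪ ρ} :=
    (Kernel.measurableSet_absolutelyContinuous κ (Kernel.const X ρ)).compl
  have hμS : μ {x | ¬ κ x ≪ ρ} ≠ 0 := fun h0 => h (ae_iff.2 h0)
  refine eq_top_iff.2 ?_
  calc ∞ = ∫⁻ x, {x | ¬ κ x ≪ ρ}.indicator (fun _ => ∞) x ∂μ := by
        rw [lintegral_indicator_const hS, top_mul hμS]
    _ ≤ ∫⁻ x, klDiv (κ x) ρ ∂μ :=
        lintegral_mono (Set.indicator_le fun x hx => (klDiv_of_not_ac hx).ge)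

theorem lintegral_klDiv_eq_lintegral_klDiv_comp_add_of_ae_ac [IsProbabilityMeasure μ]
    [IsFiniteKernel κ] [IsFiniteMeasure ρ] (h : ∀ᵐ x ∂μ, κ x ≪ ρ) :
    ∫⁻ x, klDiv (κ x) ρ ∂μ = ∫⁻ x, klDiv (κ x) (κ ∘ₘ μ) ∂μ + klDiv (κ ∘ₘ μ) ρ := by
  set g := (κ ∘ₘ μ).rnDeriv ρ
  set f := κ.rnDeriv (Kernel.const X (κ ∘ₘ μ))
  have hcomp := Measure.comp_absolutelyContinuous_of_ae h
  have hκ := Measure.ae_absolutelyContinuous_comp h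
  have hf : ∀ x, f x =ᵐ[κ ∘ₘ μ] (κ x).rnDeriv (κ ∘ₘ μ) := fun x =>
    Kernel.rnDeriv_eq_rnDeriv_measure (η := Kernel.const X (κ ∘ₘ μ))
  have hleft : ∀ᵐ x ∂μ, klDiv (κ x) ρ
      = ∫⁻ u, ENNReal.ofReal (klFun ((f x u).toReal * (g u).toReal)) ∂ρ := by
    filter_upwards [hκ] with x hx
    rw [klDiv_eq_lintegral_klFun_of_ac (hx.trans hcomp)]
    refine lintegral_congr_ae ?_
    filter_upwards [Measure.rnDeriv_ae_eq_mul_rnDeriv hx (hf x)] with u hu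
    rw [hu, Pi.mul_apply, ENNReal.toReal_mul]
  have hmid : ∀ᵐ x ∂μ, klDiv (κ x) (κ ∘ₘ μ)
      = ∫⁻ u, g u * ENNReal.ofReal (klFun (f x u).toReal) ∂ρ := by
    filter_upwards [hκ] with x hx
    rw [klDiv_eq_lintegral_klFun_of_ac hx, lintegral_rnDeriv_mul hcomp (by fun_prop)]
    exact lintegral_congr_ae ((hf x).mono fun u hu => by simp only [hu])
  have hright : klDiv (κ ∘ₘ μ) ρ = ∫⁻ u, ENNReal.ofReal (klFun (g u).toReal) ∂ρ :=
    klDiv_eq_lintegral_klFun_of_ac hcomp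
  rw [lintegral_congr_ae hleft, lintegral_congr_ae hmid, hright]
  conv_lhs => rw [lintegral_lintegral_swap (by fun_prop)]
  conv_rhs => rw [lintegral_lintegral_swap (by fun_prop), ← lintegral_add_right _ (by fun_prop)]
  refine lintegral_congr_ae ?_
  have hf_mass :=
    Measure.ae_rnDeriv_ne_zero_imp_of_ae ρ (Measure.ae_lintegral_rnDeriv_comp_eq_one hκ)
  filter_upwards [hf_mass, Measure.rnDeriv_lt_top (κ ∘ₘ μ) ρ] with u hu_mass hu_top
  rcases eq_or_ne (g u) 0 with hg0 | hg0
  · simp [hg0]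
  · rw [lintegral_const_mul _ (by fun_prop)]
    exact lintegral_ofReal_klFun_toReal_mul (by fun_prop) (hu_mass hg0) hu_top.ne

variable (μ κ ρ) in
theorem lintegral_klDiv_eq_lintegral_klDiv_comp_add [IsProbabilityMeasure μ] [IsFiniteKernel κ]
    [IsFiniteMeasure ρ] :
    ∫⁻ x, klDiv (κ x) ρ ∂μ = ∫⁻ x, klDiv (κ x) (κ ∘ₘ μ) ∂μ + klDiv (κ ∘ₘ μ) ρ := by
  by_cases h : ∀ᵐ x ∂μ, κ x ≪ ρ
  · exact lintegral_klDiv_eq_lintegral_klDiv_comp_add_of_ae_ac h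
  rw [lintegral_klDiv_eq_top_of_not_ae_ac h]
  by_cases hcomp : κ ∘ₘ μ ≪ ρ
  · have hκ : ¬ ∀ᵐ x ∂μ, κ x ≪ κ ∘ₘ μ := fun hκ => h (hκ.mono fun _ hx => hx.trans hcomp)
    rw [lintegral_klDiv_eq_top_of_not_ae_ac hκ, top_add]
  · rw [klDiv_of_not_ac hcomp, add_top]

end InformationTheory

/-- Mathlib's `InformationTheory.klDiv` adds `q(univ) - p(univ)` to the integral of the
log-likelihood ratio; the correction vanishes for probability measures. -/
lemma klDiv_eq_informationTheory_klDiv {α : Type*} [MeasurableSpace α] (p q : Measure α)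
    [IsProbabilityMeasure p] [IsProbabilityMeasure q] :
    klDiv p q = InformationTheory.klDiv p q := by
  by_cases h : p ≪ q ∧ Integrable (llr p q) p
  · rw [klDiv, if_pos h, InformationTheory.klDiv_of_ac_of_integrable h.1 h.2]
    simp
  · rw [klDiv, if_neg h, InformationTheory.klDiv_eq_top_iff.2 fun hac hint => h ⟨hac, hint⟩]

/-- Decomposition of the expected KL cost: for the marginal `ρ* = μ.bind κ`,
`∫ D_KL(κ(x) ‖ ρ) dμ = ∫ D_KL(κ(x) ‖ ρ*) dμ + D_KL(ρ* ‖ ρ)`; in particular the marginal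
minimizes the expected KL divergence over priors. -/
theorem expected_klDiv_decomposition
    {X U : Type*} [MeasurableSpace X] [MeasurableSpace U] [StandardBorelSpace U]
    (μ : Measure X) [IsProbabilityMeasure μ]
    (κ : Kernel X U) [IsMarkovKernel κ]
    (ρ : Measure U) [IsProbabilityMeasure ρ] :
    (∫⁻ x, klDiv (κ x) ρ ∂μ =
        ∫⁻ x, klDiv (κ x) (μ.bind κ) ∂μ + klDiv (μ.bind κ) ρ) ∧
      ∀ ρ' : Measure U, IsProbabilityMeasure ρ' →
        ∫⁻ x, klDiv (κ x) (μ.bind κ) ∂μ ≤ ∫⁻ x, klDiv (κ x) ρ' ∂μ := by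
  have decomposition (ρ' : Measure U) [IsProbabilityMeasure ρ'] :
      ∫⁻ x, klDiv (κ x) ρ' ∂μ = ∫⁻ x, klDiv (κ x) (μ.bind κ) ∂μ + klDiv (μ.bind κ) ρ' := by
    simp only [klDiv_eq_informationTheory_klDiv]
    exact InformationTheory.lintegral_klDiv_eq_lintegral_klDiv_comp_add μ κ ρ'
  exact ⟨decomposition ρ, fun ρ' _ => (decomposition ρ').symm ▸ le_self_add⟩
end

section
/- Let Π be an n×n symmetric positive semi-definite real matrix, A an n×n matrix, B an n×m matrix, R an m×m symmetric positive definite matrix, Σ_ρ an m×m symmetric positive definite matrix, and ε > 0. Define S := R + Bᵀ Π B, M := S⁻¹ Bᵀ Π A, Γ := Aᵀ Π A − Aᵀ Π B S⁻¹ Bᵀ Π A, and Σ_Q := ε S⁻¹. Then Γ + ε Mᵀ (Σ_ρ + Σ_Q)⁻¹ M = Aᵀ Π A − Aᵀ Π B (S + ε Σ_ρ⁻¹)⁻¹ Bᵀ Π A. -/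
open Matrix

namespace Matrix

variable {α : Type*} [CommRing α] {m n : Type*} [Fintype m] [Fintype n]

/-- Factor `S + ε P⁻¹ = P⁻¹ (P + ε S⁻¹) S`, invert, and write `P = (P + ε S⁻¹) - ε S⁻¹`. -/
theorem inv_add_smul_inv_eq_sub [DecidableEq m] {S P : Matrix m m α} (hS : IsUnit S)
    (hP : IsUnit P) (ε : α) (hC : IsUnit (P + ε • S⁻¹)) :
    (S + ε • P⁻¹)⁻¹ = S⁻¹ - ε • (S⁻¹ * (P + ε • S⁻¹)⁻¹ * S⁻¹) := by
  rw [isUnit_iff_isUnit_det] at hS hP hC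
  set C := P + ε • S⁻¹
  have hfactor : S + ε • P⁻¹ = P⁻¹ * C * S := by
    rw [Matrix.mul_add, Matrix.add_mul, nonsing_inv_mul P hP, Matrix.one_mul, Matrix.mul_smul,
      Matrix.smul_mul, Matrix.mul_assoc, nonsing_inv_mul S hS, Matrix.mul_one, add_comm]
  calc (S + ε • P⁻¹)⁻¹ = S⁻¹ * C⁻¹ * P := by
        rw [hfactor, mul_inv_rev, mul_inv_rev, nonsing_inv_nonsing_inv P hP, Matrix.mul_assoc]
    _ = S⁻¹ * C⁻¹ * (C - ε • S⁻¹) := by rw [add_sub_cancel_right]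
    _ = S⁻¹ - ε • (S⁻¹ * C⁻¹ * S⁻¹) := by
        rw [Matrix.mul_sub, Matrix.mul_assoc S⁻¹, nonsing_inv_mul C hC, Matrix.mul_one,
          Matrix.mul_smul]

theorem sub_add_smul_transpose_mul_mul_eq {P A : Matrix n n α} {T : Matrix m m α}
    (hP : P.IsSymm) (hT : T.IsSymm) (B : Matrix n m α) (X : Matrix m m α) (ε : α) :
    Aᵀ * P * A - Aᵀ * P * B * T * Bᵀ * P * A + ε • ((T * Bᵀ * P * A)ᵀ * X * (T * Bᵀ * P * A)) =
      Aᵀ * P * A - Aᵀ * P * B * (T - ε • (T * X * T)) * Bᵀ * P * A := by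
  simp only [transpose_mul, transpose_transpose, hP.eq, hT.eq, Matrix.mul_sub, Matrix.sub_mul,
    Matrix.mul_smul, Matrix.smul_mul, Matrix.mul_assoc]
  abel

end Matrix

/-- The quadratic coefficient of the value function after one backward dynamic-programming
step with Gaussian prior covariance `Σ_ρ` equals the output of the modified Riccati map. -/
theorem value_function_riccati_step
    (n m : ℕ) (Pm : Matrix (Fin n) (Fin n) ℝ) (hPm : Pm.PosSemidef)
    (A : Matrix (Fin n) (Fin n) ℝ) (B : Matrix (Fin n) (Fin m) ℝ)
    (R Sρ : Matrix (Fin m) (Fin m) ℝ) (hR : R.PosDef) (hSρ : Sρ.PosDef)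
    (ε : ℝ) (hε : 0 < ε)
    (S : Matrix (Fin m) (Fin m) ℝ) (hS : S = R + Bᵀ * Pm * B)
    (M : Matrix (Fin m) (Fin n) ℝ) (hM : M = S⁻¹ * Bᵀ * Pm * A)
    (Γ : Matrix (Fin n) (Fin n) ℝ)
    (hΓ : Γ = Aᵀ * Pm * A - Aᵀ * Pm * B * S⁻¹ * Bᵀ * Pm * A)
    (SQ : Matrix (Fin m) (Fin m) ℝ) (hSQ : SQ = ε • S⁻¹) :
    Γ + ε • (Mᵀ * (Sρ + SQ)⁻¹ * M) =
      Aᵀ * Pm * A - Aᵀ * Pm * B * (S + ε • Sρ⁻¹)⁻¹ * Bᵀ * Pm * A := by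
  have hPm_symm : Pm.IsSymm := isHermitian_iff_isSymm.mp hPm.isHermitian
  have hS_pd : S.PosDef := by
    simpa [hS] using hR.add_posSemidef (hPm.conjTranspose_mul_mul_same B)
  have hC_pd : (Sρ + ε • S⁻¹).PosDef := hSρ.add (hS_pd.inv.smul hε)
  subst hM hΓ hSQ
  rw [inv_add_smul_inv_eq_sub hS_pd.isUnit hSρ.isUnit ε hC_pd.isUnit]
  exact sub_add_smul_transpose_mul_mul_eq hPm_symm
    (isHermitian_iff_isSymm.mp hS_pd.inv.isHermitian) B _ ε
end
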